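/- The wire test-functions vanish in L²: with Y := (−1/2, 1/2)³, the L²-norms of the vector fields g_η over the unit cell tend to zero, i.e. ∫_Y |g_η(y)|² dy → 0 as η → 0⁺ (where η ranges over values with αη < δ/2). -/

import Mathlib

open MeasureTheory Filter

noncomputable section

/-- `V3` is the Euclidean space `ℝ³`, modelled as functions `Fin 3 → ℝ`. -/
abbrev V3 := Fin 3 → ℝ

/-- The radial variable `r = |ỹ|` where `ỹ = (y₁, y₂)`. -/
def tr (y : V3) : ℝ := Real.sqrt (y 0 ^ 2 + y 1 ^ 2)

/-- `ψ_η(r) = αη · log r · ρ(r)`. -/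
def psi (α η : ℝ) (ρ : ℝ → ℝ) (r : ℝ) : ℝ := α * η * Real.log r * ρ r

/-- The wire test-function `g_η`: a rigid rotation inside the cylinder `{|ỹ| ≤ αη}`,
and `ψ_η′(r)/r` times `(−y₂, y₁, 0)` outside. -/
def gfun (α η : ℝ) (ρ : ℝ → ℝ) (y : V3) : V3 :=
  if tr y ≤ α * η then (α * η)⁻¹ • ![-(y 1), y 0, 0]
  else (deriv (psi α η ρ) (tr y) / tr y) • ![-(y 1), y 0, 0]

lemma tr_nonneg (y : V3) : 0 ≤ tr y := Real.sqrt_nonneg _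

lemma tr_sq (y : V3) : tr y ^ 2 = y 0 ^ 2 + y 1 ^ 2 := by
  rw [tr, Real.sq_sqrt]; positivity

lemma continuous_tr : Continuous tr :=
  Real.continuous_sqrt.comp (((continuous_apply 0).pow 2).add ((continuous_apply 1).pow 2))

lemma sum_sq_gfun (α η : ℝ) (ρ : ℝ → ℝ) (y : V3) :
    ∑ i, (gfun α η ρ y i) ^ 2 =
      (if tr y ≤ α * η then (α * η)⁻¹ else deriv (psi α η ρ) (tr y) / tr y) ^ 2 * tr y ^ 2 := by
  rw [tr_sq]
  by_cases h : tr y ≤ α * η <;>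
    simp [gfun, h, Fin.sum_univ_three] <;> ring

lemma psi_hasDerivAt (α η : ℝ) (ρ : ℝ → ℝ) (hρ : Differentiable ℝ ρ) {r : ℝ} (hr : 0 < r) :
    HasDerivAt (psi α η ρ)
      (α * η * r⁻¹ * ρ r + α * η * Real.log r * deriv ρ r) r := by
  have h1 : HasDerivAt (fun s => α * η * Real.log s) (α * η * r⁻¹) r :=
    (Real.hasDerivAt_log hr.ne').const_mul (α * η)
  exact h1.mul (hρ r).hasDerivAt

/-- The `L²(Y)`-norms of the wire test-functions vanish as `η → 0⁺`,
where `Y = (−1/2, 1/2)³`. -/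
theorem gfun_L2_tendsto_zero
    (α δ : ℝ) (hα : 0 < α) (hδ : δ ∈ Set.Ioo (0 : ℝ) (1 / 2))
    (ρ : ℝ → ℝ) (hρsmooth : ContDiff ℝ (⊤ : ℕ∞) ρ) (hρmono : AntitoneOn ρ (Set.Ici 0))
    (hρ1 : ∀ r : ℝ, r ≤ δ / 2 → ρ r = 1) (hρ0 : ∀ r : ℝ, δ ≤ r → ρ r = 0) :
    Tendsto
      (fun η : ℝ =>
        ∫ y in Set.univ.pi fun _ : Fin 3 => Set.Ioo (-(1 : ℝ) / 2) (1 / 2),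
          ∑ i, (gfun α η ρ y i) ^ 2)
      (nhdsWithin 0 (Set.Ioo 0 (δ / (2 * α)))) (nhds 0) := by
  obtain ⟨hδ0, hδ2⟩ := hδ
  have hρdiff : Differentiable ℝ ρ := hρsmooth.differentiable (by simp)
  set Y : Set V3 := Set.univ.pi fun _ : Fin 3 => Set.Ioo (-(1 : ℝ) / 2) (1 / 2) with hY
  set l : Filter ℝ := nhdsWithin 0 (Set.Ioo 0 (δ / (2 * α))) with hl
  set F : ℝ → V3 → ℝ := fun η y => ∑ i, (gfun α η ρ y i) ^ 2 with hF
  -- basic facts about ρ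
  have hρ_le_one : ∀ r : ℝ, 0 ≤ r → ρ r ≤ 1 := by
    intro r hr
    calc ρ r ≤ ρ 0 := hρmono (Set.mem_Ici.2 le_rfl) (Set.mem_Ici.2 hr) hr
    _ = 1 := hρ1 0 (by linarith)
  have hρ_nonneg : ∀ r : ℝ, 0 ≤ r → 0 ≤ ρ r := by
    intro r hr
    rcases le_total r δ with h | h
    · calc (0:ℝ) = ρ δ := (hρ0 δ le_rfl).symm
      _ ≤ ρ r := hρmono (Set.mem_Ici.2 hr) (Set.mem_Ici.2 hδ0.le) h
    · exact (hρ0 r h).ge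
  have hρ'_lo : ∀ r : ℝ, r < δ / 2 → deriv ρ r = 0 := by
    intro r hr
    have h : ρ =ᶠ[nhds r] fun _ => (1:ℝ) := by
      filter_upwards [Iio_mem_nhds hr] with x hx using hρ1 x hx.le
    rw [h.deriv_eq, deriv_const]
  have hρ'_hi : ∀ r : ℝ, δ < r → deriv ρ r = 0 := by
    intro r hr
    have h : ρ =ᶠ[nhds r] fun _ => (0:ℝ) := by
      filter_upwards [Ioi_mem_nhds hr] with x hx using hρ0 x hx.le
    rw [h.deriv_eq, deriv_const]
  -- bound on |log r * deriv ρ r| on the annulus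
  obtain ⟨K, hK⟩ := (isCompact_Icc (a := δ/2) (b := δ)).exists_bound_of_continuousOn
    (f := fun r => Real.log r * deriv ρ r)
    (((Real.continuousOn_log).mono (by
        intro x hx
        simp only [Set.mem_compl_iff, Set.mem_singleton_iff]
        intro h; rw [h] at hx; exact absurd hx.1 (by linarith))).mul
      ((hρsmooth.continuous_deriv (by simp)).continuousOn))
  set C : ℝ := max K 0 with hC
  have hC0 : 0 ≤ C := le_max_right _ _
  have hlogbound : ∀ r : ℝ, δ / 2 ≤ r → |Real.log r * deriv ρ r| ≤ C := by
    intro r hr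
    rcases le_or_gt r δ with h | h
    · refine le_trans ?_ (le_max_left _ _)
      rw [← Real.norm_eq_abs]; exact hK r ⟨hr, h⟩
    · rw [hρ'_hi r h]; simpa using hC0
  set B : ℝ := (1 + (δ / 2) * C) ^ 2 with hB
  have hB1 : (1:ℝ) ≤ B := by nlinarith [mul_nonneg (by linarith : (0:ℝ) ≤ δ / 2) hC0]
  -- finite measure on Y
  have hYvol : volume Y < ⊤ := by
    rw [hY, volume_pi_pi]
    simp only [Real.volume_Ioo]
    refine ENNReal.prod_lt_top ?_
    intro i _
    exact ENNReal.ofReal_lt_top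
  haveI : IsFiniteMeasure (volume.restrict Y) :=
    ⟨by rwa [Measure.restrict_apply_univ]⟩
  -- measurability
  have hmeas : ∀ η : ℝ, AEStronglyMeasurable (F η) (volume.restrict Y) := by
    intro η
    refine (Measurable.aestronglyMeasurable ?_).restrict
    have htr : Measurable tr := continuous_tr.measurable
    have hFeq : F η = fun y =>
        (if tr y ≤ α * η then (α * η)⁻¹ else deriv (psi α η ρ) (tr y) / tr y) ^ 2 * tr y ^ 2 := by
      funext y; exact sum_sq_gfun α η ρ y
    rw [hFeq]
    refine Measurable.mul ?_ ((htr.pow_const 2))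
    refine Measurable.pow_const ?_ 2
    exact Measurable.ite (measurableSet_le htr measurable_const) measurable_const
      (((measurable_deriv _).comp htr).div htr)
  -- uniform bound
  have hbound : ∀ᶠ η in l, ∀ᵐ y ∂(volume.restrict Y), ‖F η y‖ ≤ B := by
    filter_upwards [self_mem_nhdsWithin] with η hη
    obtain ⟨hη0, hηδ⟩ := hη
    have hαη : 0 < α * η := by positivity
    have hαηδ : α * η < δ / 2 := by
      have := (lt_div_iff₀ (by positivity : (0:ℝ) < 2 * α)).1 hηδ
      nlinarith
    refine Filter.Eventually.of_forall fun y => ?_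
    have hFnn : 0 ≤ F η y := Finset.sum_nonneg fun i _ => sq_nonneg _
    rw [Real.norm_eq_abs, abs_of_nonneg hFnn, hF]
    simp only []
    rw [sum_sq_gfun]
    by_cases h : tr y ≤ α * η
    · rw [if_pos h]
      have h1 : tr y ^ 2 ≤ (α * η) ^ 2 := by nlinarith [tr_nonneg y]
      calc (α * η)⁻¹ ^ 2 * tr y ^ 2 ≤ (α * η)⁻¹ ^ 2 * (α * η) ^ 2 := by
            apply mul_le_mul_of_nonneg_left h1 (by positivity)
        _ = 1 := by field_simp
        _ ≤ B := hB1
    · rw [if_neg h]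
      push_neg at h
      have hr0 : 0 < tr y := lt_trans hαη h
      have hder := (psi_hasDerivAt α η ρ hρdiff hr0).deriv
      have hdiv : (deriv (psi α η ρ) (tr y) / tr y) ^ 2 * tr y ^ 2
          = deriv (psi α η ρ) (tr y) ^ 2 := by
        field_simp
      rw [hdiv, hder]
      have habs : |α * η * (tr y)⁻¹ * ρ (tr y) + α * η * Real.log (tr y) * deriv ρ (tr y)|
          ≤ 1 + (δ / 2) * C := by
        refine (abs_add_le _ _).trans ?_
        have t1 : |α * η * (tr y)⁻¹ * ρ (tr y)| ≤ 1 := by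
          rw [abs_of_nonneg (mul_nonneg (by positivity) (hρ_nonneg _ hr0.le))]
          have h1 : α * η * (tr y)⁻¹ ≤ 1 := by
            rw [← div_eq_mul_inv, div_le_one hr0]; exact h.le
          calc α * η * (tr y)⁻¹ * ρ (tr y) ≤ 1 * 1 :=
                mul_le_mul h1 (hρ_le_one _ hr0.le) (hρ_nonneg _ hr0.le) zero_le_one
            _ = 1 := one_mul 1
        have t2 : |α * η * Real.log (tr y) * deriv ρ (tr y)| ≤ (δ / 2) * C := by
          rw [mul_assoc, abs_mul, abs_of_nonneg hαη.le]
          rcases lt_or_ge (tr y) (δ / 2) with hcase | hcase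
          · rw [hρ'_lo _ hcase]
            simp only [mul_zero, abs_zero, mul_zero]
            positivity
          · exact mul_le_mul hαηδ.le (hlogbound _ hcase) (abs_nonneg _)
              (by linarith)
        linarith
      calc (α * η * (tr y)⁻¹ * ρ (tr y) + α * η * Real.log (tr y) * deriv ρ (tr y)) ^ 2
          = |α * η * (tr y)⁻¹ * ρ (tr y) + α * η * Real.log (tr y) * deriv ρ (tr y)| ^ 2 := by
            rw [sq_abs]
        _ ≤ (1 + (δ / 2) * C) ^ 2 := by
            apply pow_le_pow_left₀ (abs_nonneg _) habs
        _ = B := rfl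
  -- pointwise limit
  have hlim : ∀ᵐ y ∂(volume.restrict Y), Tendsto (fun η => F η y) l (nhds 0) := by
    have hnull : volume {y : V3 | y 0 = 0} = 0 := by
      have heq : {y : V3 | y 0 = 0}
          = Set.pi Set.univ (fun i => if i = 0 then ({0} : Set ℝ) else Set.univ) := by
        ext y
        simp only [Set.mem_setOf_eq, Set.mem_pi, Set.mem_univ, true_implies]
        constructor
        · intro hy i; by_cases hi : i = 0 <;> simp [hi, hy]
        · intro hy; have := hy 0; simpa using this
      rw [heq, volume_pi_pi, Finset.prod_eq_zero (Finset.mem_univ 0)]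
      simp
    have hane : ∀ᵐ y : V3 ∂volume, y 0 ≠ 0 := by
      rw [ae_iff]
      convert hnull using 2
      ext y; simp
    refine ae_restrict_of_ae ?_
    filter_upwards [hane] with y hy
    have hr0 : 0 < tr y := by
      rw [tr, Real.sqrt_pos]
      have : 0 < y 0 ^ 2 := by positivity
      nlinarith [sq_nonneg (y 1)]
    set c : ℝ := (α * (tr y)⁻¹ * ρ (tr y) + α * Real.log (tr y) * deriv ρ (tr y)) with hc
    have hev : (fun η => F η y) =ᶠ[l] fun η => η ^ 2 * c ^ 2 := by
      have hmem : Set.Iio (tr y / α) ∈ nhds (0:ℝ) := Iio_mem_nhds (by positivity)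
      filter_upwards [self_mem_nhdsWithin, (nhdsWithin_le_nhds hmem : _)] with η hη hη'
      have hη0 : 0 < η := hη.1
      have hlt : α * η < tr y := by
        rw [Set.mem_Iio] at hη'
        calc α * η < α * (tr y / α) := by exact mul_lt_mul_of_pos_left hη' hα
          _ = tr y := by field_simp
      have hnle : ¬ tr y ≤ α * η := not_le.2 hlt
      rw [hF]
      simp only []
      rw [sum_sq_gfun, if_neg hnle, (psi_hasDerivAt α η ρ hρdiff hr0).deriv]
      have : (α * η * (tr y)⁻¹ * ρ (tr y) + α * η * Real.log (tr y) * deriv ρ (tr y))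
          = η * c := by rw [hc]; ring
      rw [div_pow, this]
      have htrne : tr y ≠ 0 := hr0.ne'
      field_simp
    refine Tendsto.congr' hev.symm ?_
    have : Tendsto (fun η : ℝ => η ^ 2 * c ^ 2) (nhds 0) (nhds 0) := by
      have := (continuous_pow 2).tendsto (0:ℝ)
      simpa using (Continuous.tendsto' (f := fun η : ℝ => η ^ 2 * c ^ 2) (by fun_prop) 0 0 (by simp))
    exact this.mono_left nhdsWithin_le_nhds
  have := tendsto_integral_filter_of_dominated_convergence (μ := volume.restrict Y)
    (F := F) (f := fun _ => 0) (fun _ => B)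
    (Filter.Eventually.of_forall hmeas) hbound (integrable_const B) hlim
  simpa using this
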